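/- Assume a ∈ [2π/5, π/2). For every ρ ∈ ℂ with ρ ≠ 0, setting λ = ρ², the characteristic function Δ₀ satisfies Δ₀(λ) = sin(ρπ)/ρ − A₀ (cos ρ(π−a))/(2ρ²) + (1/(2ρ²)) ∫_a^π q(t) cos ρ(2t−π−a) dt + Y₂(π,λ), where A₀ = ∫_a^π q(t) dt and Y₂(x,λ) = ∫_{2a}^x (sin ρ(x−t)/ρ) q(t) Y₁(t−a,λ) dt with Y₁(x,λ) = −(cos ρ(x−a))/(2ρ²) ∫_a^x q(t) dt + (1/(2ρ²)) ∫_a^x q(t) cos ρ(x−2t+a) dt. -/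

import Mathlib

open Real Set MeasureTheory intervalIntegral Filter Asymptotics Topology

noncomputable section

/-- `y` is a (strong) solution of the delay equation `-y''(x) + q(x) y(x - a) = λ y(x)`
on `(0, π)` (equivalently `y'' = q(x) y(x - a) - λ y`), differentiable on `[0, π]` with
continuous derivative there, and with initial conditions `y(0) = 0`, `y'(0) = 1`. -/
def IsSolution (a : ℝ) (q : ℝ → ℂ) (lam : ℂ) (y : ℝ → ℂ) : Prop :=
  (∀ x ∈ Icc (0:ℝ) π, HasDerivAt y (deriv y x) x) ∧
  (∀ x ∈ Ioo (0:ℝ) π, HasDerivAt (deriv y) (q x * y (x - a) - lam * y x) x) ∧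
  ContinuousOn (deriv y) (Icc 0 π) ∧
  y 0 = 0 ∧ deriv y 0 = 1

/-- The term `Y₁(x, λ)`, where `λ = ρ²`. -/
def Y1 (a : ℝ) (q : ℝ → ℂ) (ρ : ℂ) (x : ℝ) : ℂ :=
  -(Complex.cos (ρ * (x - a)) / (2 * ρ ^ 2)) * (∫ t in a..x, q t)
    + (1 / (2 * ρ ^ 2)) * ∫ t in a..x, q t * Complex.cos (ρ * (x - 2 * t + a))

/-- The term `Y₂(x, λ)`, where `λ = ρ²`. -/
def Y2 (a : ℝ) (q : ℝ → ℂ) (ρ : ℂ) (x : ℝ) : ℂ :=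
  ∫ t in (2 * a)..x, (Complex.sin (ρ * (x - t)) / ρ) * q t * Y1 a q ρ (t - a)

/-!
Variation of constants turns the delay equation into the integral equation
`y x = sin (ρ x) / ρ + ∫₀ˣ sin (ρ (x - t)) / ρ * q t * y (t - a) dt`.
Since `q` vanishes on `[0, a]`, the integral term vanishes for `x ≤ a`, so `y = sin (ρ ·) / ρ`
there; substituting this back gives `y = sin (ρ ·) / ρ + Y₁` on `[0, 2a]` (product-to-sum
formula for `sin * sin`). As `a ≥ 2π/5`, every delayed argument `t - a ≤ π - a` lies in
`[0, 2a]`, so a last substitution at `x = π` yields the expansion; the `Y₁` part only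
contributes for `t ≥ 2a`.
-/

lemma hasDerivAt_sin_mul_sub (ρ : ℂ) (x t : ℝ) :
    HasDerivAt (fun s : ℝ => Complex.sin (ρ * (x - s)))
      (-(ρ * Complex.cos (ρ * (x - t)))) t := by
  have h := (Complex.hasDerivAt_sin _).comp t
    (((hasDerivAt_id t).const_sub x).ofReal_comp.const_mul ρ)
  convert h using 1 <;> first | (ext; simp) | (simp only [id]; push_cast; ring)

lemma hasDerivAt_cos_mul_sub (ρ : ℂ) (x t : ℝ) :
    HasDerivAt (fun s : ℝ => Complex.cos (ρ * (x - s))) (ρ * Complex.sin (ρ * (x - t))) t := by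
  have h := (Complex.hasDerivAt_cos _).comp t
    (((hasDerivAt_id t).const_sub x).ofReal_comp.const_mul ρ)
  convert h using 1 <;> first | (ext; simp) | (simp only [id]; push_cast; ring)

theorem variation_of_constants {y y' f : ℝ → ℂ} {ρ : ℂ} {x : ℝ} (hx : 0 ≤ x)
    (hy : ∀ t ∈ Icc 0 x, HasDerivAt y (y' t) t) (hy' : ContinuousOn y' (Icc 0 x))
    (hy'' : ∀ t ∈ Ioo 0 x, HasDerivAt y' (f t - ρ ^ 2 * y t) t)
    (hf : IntervalIntegrable f volume 0 x) :
    ρ * y x = ρ * y 0 * Complex.cos (ρ * x) + y' 0 * Complex.sin (ρ * x)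
      + ∫ t in 0..x, Complex.sin (ρ * (x - t)) * f t := by
  set G : ℝ → ℂ := fun t =>
    ρ * y t * Complex.cos (ρ * (x - t)) + y' t * Complex.sin (ρ * (x - t))
  have hGcont : ContinuousOn G (Icc 0 x) := by
    have hyc : ContinuousOn y (Icc 0 x) := fun t ht => (hy t ht).continuousAt.continuousWithinAt
    refine ((continuousOn_const.mul hyc).mul ?_).add (hy'.mul ?_) <;>
      exact (Continuous.continuousOn (by fun_prop))
  have hGderiv : ∀ t ∈ Ioo 0 x, HasDerivAt G (Complex.sin (ρ * (x - t)) * f t) t := by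
    intro t ht
    have h := (((hy t (Ioo_subset_Icc_self ht)).const_mul ρ).mul
      (hasDerivAt_cos_mul_sub ρ x t)).add ((hy'' t ht).mul (hasDerivAt_sin_mul_sub ρ x t))
    exact h.congr_deriv (by ring)
  have hftc := integral_eq_sub_of_hasDeriv_right_of_le hx hGcont
    (fun t ht => (hGderiv t ht).hasDerivWithinAt)
    (hf.continuousOn_mul (Continuous.continuousOn (by fun_prop)))
  simp only [G, sub_self, mul_zero, Complex.ofReal_zero, sub_zero, Complex.cos_zero,
    Complex.sin_zero] at hftc
  linear_combination -hftc

section VanishingIntegrand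

variable {E : Type*} [NormedAddCommGroup E] {f : ℝ → E} {a b c : ℝ}

lemma intervalIntegrable_of_eqOn_zero (h : EqOn f 0 (uIcc a b)) :
    IntervalIntegrable f volume a b :=
  (intervalIntegrable_const (c := (0 : E))).congr fun _ ht => (h (uIoc_subset_uIcc ht)).symm

lemma integral_eq_integral_of_eqOn_zero [NormedSpace ℝ E] (h : EqOn f 0 (uIcc a b))
    (hf : IntervalIntegrable f volume b c) : ∫ t in a..c, f t = ∫ t in b..c, f t := by
  rw [← integral_add_adjacent_intervals (intervalIntegrable_of_eqOn_zero h) hf,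
    integral_congr h]
  simp

end VanishingIntegrand

section DelayedCoefficient

variable {a b : ℝ} {q : ℝ → ℂ}

lemma intervalIntegrable_of_eq_zero_on_Icc (ha : 0 ≤ a) (hab : a ≤ b)
    (hq : IntegrableOn q (Ioc a b)) (hq0 : ∀ t ∈ Icc 0 a, q t = 0) :
    IntervalIntegrable q volume 0 b := by
  refine IntervalIntegrable.trans (b := a) (intervalIntegrable_of_eqOn_zero ?_) ?_
  · intro t ht
    rw [uIcc_of_le ha] at ht
    exact hq0 t ht
  · rwa [intervalIntegrable_iff_integrableOn_Ioc_of_le hab]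

lemma intervalIntegrable_mul_comp_sub (ha : 0 ≤ a) (hab : a ≤ b)
    (hq : IntegrableOn q (Ioc a b)) (hq0 : ∀ t ∈ Icc 0 a, q t = 0) {w : ℝ → ℂ}
    (hw : ContinuousOn w (Icc 0 (b - a))) :
    IntervalIntegrable (fun t => q t * w (t - a)) volume 0 b := by
  refine IntervalIntegrable.trans (b := a) (intervalIntegrable_of_eqOn_zero ?_) ?_
  · intro t ht
    rw [uIcc_of_le ha] at ht
    simp [hq0 t ht]
  · refine ((intervalIntegrable_iff_integrableOn_Ioc_of_le hab).2 hq).mul_continuousOn ?_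
    rw [uIcc_of_le hab]
    exact hw.comp (continuous_sub_right a).continuousOn
      fun t ht => ⟨by simp [ht.1], by simp [ht.2]⟩

end DelayedCoefficient

-- `Y2 a q ρ x` is `delayIntegral a q ρ (Y1 a q ρ) (2 * a) x` by definition.
def delayIntegral (a : ℝ) (q : ℝ → ℂ) (ρ : ℂ) (w : ℝ → ℂ) (c x : ℝ) : ℂ :=
  ∫ t in c..x, Complex.sin (ρ * (x - t)) / ρ * q t * w (t - a)

section DelayIntegral

variable {a b c x : ℝ} {q v w : ℝ → ℂ} {ρ : ℂ}

lemma mul_comp_sub_eqOn (hq0 : ∀ t ∈ Icc 0 a, q t = 0) (h : EqOn v w (Icc 0 (x - a))) :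
    EqOn (fun t => q t * v (t - a)) (fun t => q t * w (t - a)) (Icc 0 x) := by
  intro t ht
  rcases le_or_gt t a with hta | hta
  · simp [hq0 t ⟨ht.1, hta⟩]
  · exact congrArg (q t * ·) (h ⟨by linarith, by linarith [ht.2]⟩)

lemma intervalIntegrable_delayIntegrand (ha : 0 ≤ a) (hab : a ≤ b)
    (hq : IntegrableOn q (Ioc a b)) (hq0 : ∀ t ∈ Icc 0 a, q t = 0)
    (hw : ContinuousOn w (Icc 0 (b - a))) (ρ : ℂ) (x : ℝ) :
    IntervalIntegrable (fun t => Complex.sin (ρ * (x - t)) / ρ * q t * w (t - a))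
      volume 0 b := by
  simp_rw [mul_assoc]
  exact (intervalIntegrable_mul_comp_sub ha hab hq hq0 hw).continuousOn_mul
    (Continuous.continuousOn (by fun_prop))

lemma delayIntegral_add
    (hv : IntervalIntegrable (fun t => Complex.sin (ρ * (x - t)) / ρ * q t * v (t - a))
      volume c x)
    (hw : IntervalIntegrable (fun t => Complex.sin (ρ * (x - t)) / ρ * q t * w (t - a))
      volume c x) :
    delayIntegral a q ρ (v + w) c x = delayIntegral a q ρ v c x + delayIntegral a q ρ w c x := by
  rw [delayIntegral, delayIntegral, delayIntegral, ← integral_add hv hw]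
  simp only [Pi.add_apply, mul_add]

lemma delayIntegral_congr (hc : 0 ≤ c) (hcx : c ≤ x) (hq0 : ∀ t ∈ Icc 0 a, q t = 0)
    (h : EqOn v w (Icc 0 (x - a))) : delayIntegral a q ρ v c x = delayIntegral a q ρ w c x := by
  refine integral_congr fun t ht => ?_
  rw [uIcc_of_le hcx] at ht
  have := mul_comp_sub_eqOn hq0 h ⟨hc.trans ht.1, ht.2⟩
  simp only [mul_assoc] at this ⊢
  rw [this]

lemma delayIntegral_eq_of_eqOn_zero (hc : 0 ≤ c) (hq0 : ∀ t ∈ Icc 0 a, q t = 0)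
    (hv : EqOn v 0 (Icc 0 (c - a)))
    (hint : IntervalIntegrable (fun t => Complex.sin (ρ * (x - t)) / ρ * q t * v (t - a))
      volume c x) :
    delayIntegral a q ρ v 0 x = delayIntegral a q ρ v c x := by
  refine integral_eq_integral_of_eqOn_zero (fun t ht => ?_) hint
  rw [uIcc_of_le hc] at ht
  have := mul_comp_sub_eqOn hq0 hv ht
  simp only [Pi.zero_apply, mul_zero] at this
  simp [mul_assoc, this]

lemma sin_mul_sin_delay (ρ : ℂ) (hρ : ρ ≠ 0) (a x t : ℝ) (qt : ℂ) :
    Complex.sin (ρ * (x - t)) / ρ * qt * (Complex.sin (ρ * (t - a)) / ρ)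
      = 1 / (2 * ρ ^ 2) * (qt * Complex.cos (ρ * (x - 2 * t + a)))
        - Complex.cos (ρ * (x - a)) / (2 * ρ ^ 2) * qt := by
  have hX : ρ * (x - 2 * t + a) = ρ * (x - t) - ρ * (t - a) := by ring
  have hY : ρ * (x - a) = ρ * (x - t) + ρ * (t - a) := by ring
  rw [hX, hY, Complex.cos_sub, Complex.cos_add]
  field_simp
  ring

lemma delayIntegral_sin_div (hρ : ρ ≠ 0) (ha : 0 ≤ a) (hq0 : ∀ t ∈ Icc 0 a, q t = 0)
    (hq : IntervalIntegrable q volume a x) :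
    delayIntegral a q ρ (fun u => Complex.sin (ρ * u) / ρ) 0 x = Y1 a q ρ x := by
  have hqcos :
      IntervalIntegrable (fun t => q t * Complex.cos (ρ * (x - 2 * t + a))) volume a x :=
    hq.mul_continuousOn (Continuous.continuousOn (by fun_prop))
  set g : ℝ → ℂ := fun t => 1 / (2 * ρ ^ 2) * (q t * Complex.cos (ρ * (x - 2 * t + a)))
    - Complex.cos (ρ * (x - a)) / (2 * ρ ^ 2) * q t
  calc delayIntegral a q ρ (fun u => Complex.sin (ρ * u) / ρ) 0 x
      = ∫ t in 0..x, g t := integral_congr fun t _ => by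
        simp only [g, ← sin_mul_sin_delay ρ hρ a x t]
        push_cast
        rfl
    _ = ∫ t in a..x, g t := by
        refine integral_eq_integral_of_eqOn_zero (fun t ht => ?_)
          ((hqcos.const_mul _).sub (hq.const_mul _))
        rw [uIcc_of_le ha] at ht
        simp [g, hq0 t ht]
    _ = Y1 a q ρ x := by
        rw [integral_sub (hqcos.const_mul _) (hq.const_mul _), intervalIntegral.integral_const_mul,
          intervalIntegral.integral_const_mul, Y1]
        ring

end DelayIntegral

namespace IsSolution

variable {a x : ℝ} {q y : ℝ → ℂ} {lam ρ : ℂ}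

lemma continuousOn (hy : IsSolution a q lam y) : ContinuousOn y (Icc 0 π) :=
  fun t ht => (hy.1 t ht).continuousAt.continuousWithinAt

lemma eq_sin_div_add_delayIntegral (ha : 0 ≤ a) (haπ : a ≤ π) (hq : IntegrableOn q (Ioc a π))
    (hq0 : ∀ t ∈ Icc 0 a, q t = 0) (hρ : ρ ≠ 0) (hy : IsSolution a q (ρ ^ 2) y)
    (hx : x ∈ Icc 0 π) :
    y x = Complex.sin (ρ * x) / ρ + delayIntegral a q ρ y 0 x := by
  have hf : IntervalIntegrable (fun t => q t * y (t - a)) volume 0 x := by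
    refine (intervalIntegrable_mul_comp_sub ha haπ hq hq0
      (hy.continuousOn.mono (Icc_subset_Icc_right (by linarith)))).mono_set ?_
    rw [uIcc_of_le hx.1, uIcc_of_le pi_pos.le]
    exact Icc_subset_Icc_right hx.2
  have hvar := variation_of_constants hx.1 (fun t ht => hy.1 t ⟨ht.1, ht.2.trans hx.2⟩)
    (hy.2.2.1.mono (Icc_subset_Icc_right hx.2))
    (fun t ht => hy.2.1 t ⟨ht.1, ht.2.trans_le hx.2⟩) hf
  have hdiv : delayIntegral a q ρ y 0 x
      = (∫ t in 0..x, Complex.sin (ρ * (x - t)) * (q t * y (t - a))) / ρ := by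
    rw [delayIntegral, ← intervalIntegral.integral_div]
    congr 1 with t
    ring
  rw [hy.2.2.2.1, hy.2.2.2.2] at hvar
  rw [hdiv, ← add_div, eq_div_iff hρ]
  linear_combination hvar

lemma eqOn_sin_div (ha : 0 ≤ a) (haπ : a ≤ π) (hq : IntegrableOn q (Ioc a π))
    (hq0 : ∀ t ∈ Icc 0 a, q t = 0) (hρ : ρ ≠ 0) (hy : IsSolution a q (ρ ^ 2) y) :
    EqOn y (fun u => Complex.sin (ρ * u) / ρ) (Icc 0 a) := by
  intro x hx
  have hzero : delayIntegral a q ρ y 0 x = 0 := by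
    refine (integral_congr fun t ht => ?_).trans integral_zero
    rw [uIcc_of_le hx.1] at ht
    simp [hq0 t ⟨ht.1, ht.2.trans hx.2⟩]
  rw [hy.eq_sin_div_add_delayIntegral ha haπ hq hq0 hρ ⟨hx.1, hx.2.trans haπ⟩, hzero,
    add_zero]

lemma eqOn_sin_div_add_Y1 (ha : 0 ≤ a) (h2a : 2 * a ≤ π) (hq : IntegrableOn q (Ioc a π))
    (hq0 : ∀ t ∈ Icc 0 a, q t = 0) (hρ : ρ ≠ 0) (hy : IsSolution a q (ρ ^ 2) y) :
    EqOn y (fun u => Complex.sin (ρ * u) / ρ + Y1 a q ρ u) (Icc 0 (2 * a)) := by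
  intro x hx
  have haπ : a ≤ π := by linarith
  have hqx : IntervalIntegrable q volume a x := by
    refine (intervalIntegrable_of_eq_zero_on_Icc ha haπ hq hq0).mono_set ?_
    rw [uIcc_of_le pi_pos.le]
    exact uIcc_subset_Icc ⟨ha, haπ⟩ ⟨hx.1, hx.2.trans h2a⟩
  rw [hy.eq_sin_div_add_delayIntegral ha haπ hq hq0 hρ ⟨hx.1, hx.2.trans h2a⟩,
    delayIntegral_congr le_rfl hx.1 hq0 ((hy.eqOn_sin_div ha haπ hq hq0 hρ).mono
      (Icc_subset_Icc_right (by linarith [hx.2]))),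
    delayIntegral_sin_div hρ ha hq0 hqx]

lemma delayIntegral_eq_Y1_add_Y2 (ha : 0 ≤ a) (h2a : 2 * a ≤ π) (h3a : π - a ≤ 2 * a)
    (hq : IntegrableOn q (Ioc a π)) (hq0 : ∀ t ∈ Icc 0 a, q t = 0) (hρ : ρ ≠ 0)
    (hy : IsSolution a q (ρ ^ 2) y) :
    delayIntegral a q ρ y 0 π = Y1 a q ρ π + Y2 a q ρ π := by
  have haπ : a ≤ π := by linarith
  set y₀ : ℝ → ℂ := fun u => Complex.sin (ρ * u) / ρ
  have hy₀ : ContinuousOn y₀ (Icc 0 (π - a)) := Continuous.continuousOn (by fun_prop)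
  have hr : ContinuousOn (y - y₀) (Icc 0 (π - a)) :=
    (hy.continuousOn.mono (Icc_subset_Icc_right (by linarith))).sub hy₀
  have hint := fun w (hw : ContinuousOn w (Icc 0 (π - a))) =>
    intervalIntegrable_delayIntegrand ha haπ hq hq0 hw ρ π
  have hsplit : delayIntegral a q ρ y 0 π
      = delayIntegral a q ρ y₀ 0 π + delayIntegral a q ρ (y - y₀) 0 π := by
    rw [← delayIntegral_add (hint y₀ hy₀) (hint _ hr), add_sub_cancel]
  have hY1 : delayIntegral a q ρ y₀ 0 π = Y1 a q ρ π :=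
    delayIntegral_sin_div hρ ha hq0 ((intervalIntegrable_iff_integrableOn_Ioc_of_le haπ).2 hq)
  have hshift : delayIntegral a q ρ (y - y₀) 0 π = delayIntegral a q ρ (y - y₀) (2 * a) π :=
    delayIntegral_eq_of_eqOn_zero (by linarith) hq0
      (fun u hu => sub_eq_zero.2
        (hy.eqOn_sin_div ha haπ hq hq0 hρ ⟨hu.1, by linarith [hu.2]⟩))
      ((hint _ hr).mono_set (by
        rw [uIcc_of_le h2a, uIcc_of_le pi_pos.le]
        exact Icc_subset_Icc_left (by linarith)))
  have hY2 : delayIntegral a q ρ (y - y₀) (2 * a) π = Y2 a q ρ π :=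
    delayIntegral_congr (by linarith) h2a hq0 fun u hu => by
      simp [y₀, hy.eqOn_sin_div_add_Y1 ha h2a hq hq0 hρ ⟨hu.1, by linarith [hu.2]⟩]
  rw [hsplit, hY1, hshift, hY2]

end IsSolution

theorem char0_expansion_general
    (a : ℝ) (ha1 : 2 * π / 5 ≤ a) (ha2 : a < π / 2)
    (q : ℝ → ℂ) (hq_int : IntegrableOn q (Ioc a π))
    (hq0 : ∀ x ∈ Icc (0:ℝ) a, q x = 0)
    (Y : ℂ → ℝ → ℂ) (hY : ∀ lam : ℂ, IsSolution a q lam (Y lam))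
    (ρ : ℂ) (hρ : ρ ≠ 0) :
    Y (ρ ^ 2) π = Complex.sin (ρ * π) / ρ
      - (∫ t in a..π, q t) * Complex.cos (ρ * (π - a)) / (2 * ρ ^ 2)
      + (1 / (2 * ρ ^ 2)) * (∫ t in a..π, q t * Complex.cos (ρ * (2 * t - π - a)))
      + Y2 a q ρ π := by
  have ha : 0 ≤ a := by linarith [pi_pos]
  have h2a : 2 * a ≤ π := by linarith
  have haπ : a ≤ π := by linarith
  have h3a : π - a ≤ 2 * a := by linarith
  have hcos : ∫ t in a..π, q t * Complex.cos (ρ * (π - 2 * t + a))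
      = ∫ t in a..π, q t * Complex.cos (ρ * (2 * t - π - a)) :=
    integral_congr fun t _ => by rw [← Complex.cos_neg]; ring_nf
  rw [(hY _).eq_sin_div_add_delayIntegral ha haπ hq_int hq0 hρ ⟨pi_pos.le, le_rfl⟩,
    (hY _).delayIntegral_eq_Y1_add_Y2 ha h2a h3a hq_int hq0 hρ, Y1, hcos]
  ring

/-- **Expansion of `Δ₀`.** For `a ∈ [2π/5, π/2)`, `ρ ≠ 0`, `λ = ρ²`:
`Δ₀(λ) = sin(ρπ)/ρ - A₀ cos(ρ(π-a))/(2ρ²) + (1/(2ρ²)) ∫_a^π q(t) cos(ρ(2t-π-a)) dt + Y₂(π, λ)`. -/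
theorem char0_expansion
    (a : ℝ) (ha1 : 2 * π / 5 ≤ a) (ha2 : a < π / 2)
    (q : ℝ → ℂ) (hq_int : IntegrableOn q (Ioc a π))
    (hq0 : ∀ x ∈ Icc (0:ℝ) a, q x = 0)
    (Y : ℂ → ℝ → ℂ) (hY : ∀ lam : ℂ, IsSolution a q lam (Y lam))
    (hYuniq : ∀ (lam : ℂ) (y : ℝ → ℂ), IsSolution a q lam y → EqOn y (Y lam) (Icc 0 π))
    (ρ : ℂ) (hρ : ρ ≠ 0) :
    Y (ρ ^ 2) π = Complex.sin (ρ * π) / ρ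
      - (∫ t in a..π, q t) * Complex.cos (ρ * (π - a)) / (2 * ρ ^ 2)
      + (1 / (2 * ρ ^ 2)) * (∫ t in a..π, q t * Complex.cos (ρ * (2 * t - π - a)))
      + Y2 a q ρ π :=
  char0_expansion_general a ha1 ha2 q hq_int hq0 Y hY ρ hρ
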